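/- arXiv:1704.06367 — 2 statements merged into one kernel-verified Lean document; each statement's English description precedes it below -/
import Mathlib

section
/- In the monoid algebra R = ℤ[ℚ≥0][ℚ/ℤ] with basis E(r,r') = q^r e(r'), the maps σ̂_{n}(E(r,r')) = E(nr, nr') are ring endomorphisms, and the maps ρ̂_n(E(r,r')) = ∑_{ns = r'} E(r/n, s) satisfy σ̂_n ∘ ρ̂_n = n · id and ρ̂_n(σ̂_n(x)·y) = x·ρ̂_n(y) for all x, y ∈ R. -/
/-- The group `ℚ/ℤ`. -/
abbrev QZ : Type := ℚ ⧸ AddSubgroup.zmultiples (1 : ℚ)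

/-- The ring `R = ℤ[ℚ≥0][ℚ/ℤ]`, the monoid algebra over `ℤ` on `ℚ≥0 × ℚ/ℤ`,
with basis `E(r,r') = q^r e(r')`. -/
abbrev RqQZ : Type := AddMonoidAlgebra ℤ (ℚ≥0 × QZ)

/-- The basis element `E(r,r') = q^r e(r')`. -/
noncomputable def E (r : ℚ≥0) (r' : QZ) : RqQZ := AddMonoidAlgebra.single (r, r') 1

/-- The monoid map `(r, r') ↦ (nr, nr')`. -/
def nSmulPair (n : ℕ) : ℚ≥0 × QZ →+ ℚ≥0 × QZ where
  toFun p := (n • p.1, n • p.2)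
  map_zero' := by simp
  map_add' a b := by simp [smul_add, Prod.add_def]

/-- The ring endomorphism `σ̂ₙ(E(r,r')) = E(nr, nr')`. -/
noncomputable def sigmaHat (n : ℕ) : RqQZ →+* RqQZ :=
  AddMonoidAlgebra.mapDomainRingHom ℤ (nSmulPair n)

/-- The value `ρ̂ₙ(E(r,r')) = ∑_{ns = r'} E(r/n, s)`: the `n` solutions `s` of
`ns = r'` in `ℚ/ℤ` are the classes of `(r̃' + k)/n`, `k = 0,…,n-1`, for any lift `r̃'`. -/
noncomputable def rhoHatVal (n : ℕ) (p : ℚ≥0 × QZ) : RqQZ :=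
  ∑ k ∈ Finset.range n,
    E (p.1 / (n : ℚ≥0)) (QuotientAddGroup.mk ((Quotient.out p.2 + (k : ℚ)) / (n : ℚ)))

/-- The `ℤ`-linear map `ρ̂ₙ` extended from its values on basis elements. -/
noncomputable def rhoHat (n : ℕ) : RqQZ →ₗ[ℤ] RqQZ :=
  (Finsupp.lsum ℤ fun p => LinearMap.toSpanSingleton ℤ RqQZ (rhoHatVal n p)) ∘ₗ
    (AddMonoidAlgebra.coeffLinearEquiv ℤ).toLinearMap

/-!
The `n` solutions of `n • s = r'` in `ℚ/ℤ` are the classes of `(x + k) / n`, `k < n`, for any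
lift `x` of `r'`. Changing the lift by an integer `m` shifts `k` by `m` modulo `n`, so the sum
defining `ρ̂ₙ(E(r,r'))` does not depend on the lift. Then `σ̂ₙ` sends each of its `n` terms to
`E(r,r')`, and computing `ρ̂ₙ(E(nr₁,nr₁') E(r₂,r₂'))` with the lift `n x₁ + x₂` exhibits every
term as `E(r₁,r₁')` times the corresponding term of `ρ̂ₙ(E(r₂,r₂'))`. Both identities extend
from basis elements by bilinearity.
-/

open Finset

lemma E_mul_E (r s : ℚ≥0) (r' s' : QZ) : E r r' * E s s' = E (r + s) (r' + s') := by
  simp [E, AddMonoidAlgebra.single_mul_single]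

lemma sigmaHat_E (n : ℕ) (r : ℚ≥0) (r' : QZ) : sigmaHat n (E r r') = E (n • r) (n • r') := by
  simp [sigmaHat, E, nSmulPair]

lemma sigmaHat_single (n : ℕ) (p : ℚ≥0 × QZ) (c : ℤ) :
    sigmaHat n (AddMonoidAlgebra.single p c) = AddMonoidAlgebra.single (nSmulPair n p) c := by
  simp [sigmaHat]

lemma single_eq_zsmul_E (p : ℚ≥0 × QZ) (c : ℤ) :
    (AddMonoidAlgebra.single p c : RqQZ) = c • E p.1 p.2 := by
  rw [E, AddMonoidAlgebra.smul_single', mul_one]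

lemma rhoHat_single (n : ℕ) (p : ℚ≥0 × QZ) (c : ℤ) :
    rhoHat n (AddMonoidAlgebra.single p c) = c • rhoHatVal n p := by
  simp [rhoHat, AddMonoidAlgebra.coeffLinearEquiv]

lemma Function.Periodic.sum_range_add_one {M : Type*} [AddCancelCommMonoid M] {f : ℤ → M}
    {n : ℕ} (hf : Function.Periodic f n) :
    ∑ k ∈ range n, f (k + 1) = ∑ k ∈ range n, f k := by
  have h := (sum_range_succ' (fun k : ℕ => f k) n).symm.trans (sum_range_succ _ n)
  push_cast at h
  rwa [← zero_add (n : ℤ), hf, add_left_inj] at h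

lemma Function.Periodic.sum_range_add {M : Type*} [AddCancelCommMonoid M] {f : ℤ → M}
    {n : ℕ} (hf : Function.Periodic f n) (m : ℤ) :
    ∑ k ∈ range n, f (k + m) = ∑ k ∈ range n, f k := by
  induction m using Int.induction_on with
  | zero => simp
  | succ m ih =>
    rw [← ih, ← (hf.add_const m).sum_range_add_one]
    simp only [add_assoc, add_comm (1 : ℤ)]
  | pred m ih =>
    rw [← ih, ← (hf.add_const (-m - 1)).sum_range_add_one]
    simp only [add_assoc, add_sub_cancel]

namespace QZ

lemma mk_intCast (m : ℤ) : (QuotientAddGroup.mk (m : ℚ) : QZ) = 0 :=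
  (QuotientAddGroup.eq_zero_iff _).2 ⟨m, by simp⟩

lemma exists_eq_add_intCast_of_mk_eq {a b : ℚ}
    (h : (QuotientAddGroup.mk a : QZ) = QuotientAddGroup.mk b) : ∃ m : ℤ, b = a + m := by
  obtain ⟨m, hm⟩ := AddSubgroup.mem_zmultiples_iff.1 (QuotientAddGroup.eq.1 h)
  exact ⟨m, by rw [← Int.smul_one_eq_cast, hm]; ring⟩

lemma periodic_mk_add_div {n : ℕ} (hn : n ≠ 0) (b : ℚ) :
    Function.Periodic (fun j : ℤ => (QuotientAddGroup.mk ((b + j) / n) : QZ)) n := by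
  intro j
  have : (b + ((j + n : ℤ) : ℚ)) / n = (b + j) / n + ((1 : ℤ) : ℚ) := by
    push_cast; field_simp; ring
  simp only [this, QuotientAddGroup.mk_add, mk_intCast, add_zero]

end QZ

lemma rhoHatVal_eq_sum_of_mk_eq {n : ℕ} (hn : n ≠ 0) (p : ℚ≥0 × QZ) {x : ℚ}
    (hx : (QuotientAddGroup.mk x : QZ) = p.2) :
    rhoHatVal n p = ∑ k ∈ range n, E (p.1 / n) (QuotientAddGroup.mk ((x + k) / n)) := by
  obtain ⟨m, hm⟩ := QZ.exists_eq_add_intCast_of_mk_eq (hx.trans (Quotient.out_eq p.2).symm)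
  have := ((QZ.periodic_mk_add_div hn x).comp (E (p.1 / n))).sum_range_add m
  simp only [Function.comp_apply, Int.cast_add, Int.cast_natCast] at this
  rw [rhoHatVal, hm, ← this]
  simp only [add_assoc, add_comm (m : ℚ)]

lemma sigmaHat_rhoHatVal {n : ℕ} (hn : n ≠ 0) (p : ℚ≥0 × QZ) :
    sigmaHat n (rhoHatVal n p) = n • E p.1 p.2 := by
  have hterm : ∀ k : ℕ, sigmaHat n (E (p.1 / n)
      (QuotientAddGroup.mk ((Quotient.out p.2 + k) / n))) = E p.1 p.2 := by
    intro k
    rw [sigmaHat_E, ← QuotientAddGroup.mk_nsmul, nsmul_eq_mul, nsmul_eq_mul,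
      mul_div_cancel₀ _ (by positivity), mul_div_cancel₀ _ (by positivity),
      QuotientAddGroup.mk_add, ← Int.cast_natCast, QZ.mk_intCast, add_zero,
      QuotientAddGroup.out_eq']
  simp [rhoHatVal, hterm]

lemma rhoHatVal_nSmulPair_add {n : ℕ} (hn : n ≠ 0) (p q : ℚ≥0 × QZ) :
    rhoHatVal n (nSmulPair n p + q) = E p.1 p.2 * rhoHatVal n q := by
  have hlift : (QuotientAddGroup.mk (n * Quotient.out p.2 + Quotient.out q.2) : QZ)
      = (nSmulPair n p + q).2 := by
    simp [nSmulPair, QuotientAddGroup.mk_add, ← nsmul_eq_mul, QuotientAddGroup.mk_nsmul]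
  rw [rhoHatVal_eq_sum_of_mk_eq hn _ hlift, rhoHatVal, mul_sum]
  refine sum_congr rfl fun k _ => ?_
  rw [E_mul_E]
  congr 1
  · have hn' : (n : ℚ≥0) ≠ 0 := Nat.cast_ne_zero.2 hn
    simp [nSmulPair, add_div, nsmul_eq_mul, mul_div_cancel_left₀ _ hn']
  · rw [show (n * Quotient.out p.2 + Quotient.out q.2 + k) / n
        = Quotient.out p.2 + (Quotient.out q.2 + k) / n by field_simp; ring,
      QuotientAddGroup.mk_add, QuotientAddGroup.out_eq']

lemma sigmaHat_rhoHat {n : ℕ} (hn : n ≠ 0) (x : RqQZ) : sigmaHat n (rhoHat n x) = n • x := by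
  induction x using AddMonoidAlgebra.induction_linear with
  | zero => simp
  | add a b ha hb => rw [map_add, map_add, ha, hb, smul_add]
  | single p c =>
    rw [rhoHat_single, map_zsmul, sigmaHat_rhoHatVal hn, single_eq_zsmul_E, smul_comm]

lemma rhoHat_sigmaHat_single_mul {n : ℕ} (hn : n ≠ 0) (p : ℚ≥0 × QZ) (y : RqQZ) :
    rhoHat n (sigmaHat n (AddMonoidAlgebra.single p 1) * y) =
      AddMonoidAlgebra.single p 1 * rhoHat n y := by
  induction y using AddMonoidAlgebra.induction_linear with
  | zero => simp
  | add a b ha hb => rw [mul_add, map_add, ha, hb, map_add, mul_add]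
  | single q d =>
    rw [sigmaHat_single, AddMonoidAlgebra.single_mul_single, one_mul, rhoHat_single,
      rhoHat_single, rhoHatVal_nSmulPair_add hn, single_eq_zsmul_E, one_smul, mul_smul_comm]

lemma rhoHat_sigmaHat_mul {n : ℕ} (hn : n ≠ 0) (x y : RqQZ) :
    rhoHat n (sigmaHat n x * y) = x * rhoHat n y := by
  induction x using AddMonoidAlgebra.induction_linear with
  | zero => simp
  | add a b ha hb => rw [map_add, add_mul, map_add, ha, hb, add_mul]
  | single p c =>
    rw [← mul_one c, ← AddMonoidAlgebra.smul_single', map_zsmul, smul_mul_assoc,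
      map_zsmul, rhoHat_sigmaHat_single_mul hn, smul_mul_assoc]

/-- In `R = ℤ[ℚ≥0][ℚ/ℤ]`: the maps `σ̂ₙ : E(r,r') ↦ E(nr,nr')` are ring
endomorphisms, `σ̂ₙ ∘ ρ̂ₙ = n·id`, and `ρ̂ₙ(σ̂ₙ(x)·y) = x·ρ̂ₙ(y)`. -/
theorem sigmaHat_rhoHat_relations (n : ℕ) (hn : 0 < n) :
    (∀ r s : ℚ≥0, ∀ r' s' : QZ,
        sigmaHat n (E r r') = E (n • r) (n • r') ∧
        sigmaHat n (E r r' * E s s') = sigmaHat n (E r r') * sigmaHat n (E s s')) ∧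
      (∀ x : RqQZ, sigmaHat n (rhoHat n x) = n • x) ∧
      (∀ x y : RqQZ, rhoHat n (sigmaHat n x * y) = x * rhoHat n y) :=
  ⟨fun r _ r' _ => ⟨sigmaHat_E n r r', map_mul _ _ _⟩, sigmaHat_rhoHat hn.ne',
    rhoHat_sigmaHat_mul hn.ne'⟩
end

section
/- Let H be the self-adjoint operator on ℓ²(ℕ⁺) defined by H ε_k = log{k}_q ε_k, where q > 1 is real. Then for β > 1, Tr(e^{-βH}) = ∑_{k≥1} {k}_q^{-β} = ζ_q(β), which is finite. -/
/-!
Since `[p]_q ≥ p` for `q ≥ 1`, multiplicativity gives `{k}_q ≥ k`, so `∑ {k}_q^{-β}` is dominated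
by `ζ(β) < ∞` for `β > 1`. Each `ε_k` is a unit vector, so the `k`-th diagonal entry of `e^{-βH}`
is `e^{-β log {k}_q} = {k}_q^{-β}`.
-/

open scoped RealInnerProductSpace

/-- The `q`-integer `[p]_q = 1 + q + ⋯ + q^(p-1)`. -/
def qInt (q : ℝ) (p : ℕ) : ℝ :=
  ∑ i ∈ Finset.range p, q ^ i

/-- `{n}_q = ∏_i [p_i]_q^{a_i}` where `n = ∏ p_i^{a_i}` is the prime factorization. -/
def qAnalog (q : ℝ) (n : ℕ) : ℝ :=
  n.factorization.prod fun p a => qInt q p ^ a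

/-- The Hilbert space `ℓ²(ℕ⁺)`. -/
noncomputable abbrev L2 : Type := lp (fun _ : ℕ+ => ℝ) 2

/-- The standard orthonormal basis vector `ε_k` of `ℓ²(ℕ⁺)`. -/
noncomputable def eps (k : ℕ+) : L2 := lp.single 2 k 1

section qAnalog

variable {q : ℝ}

lemma natCast_le_qInt (hq : 1 ≤ q) (p : ℕ) : (p : ℝ) ≤ qInt q p :=
  calc (p : ℝ) = ∑ _i ∈ Finset.range p, (1 : ℝ) := by simp
    _ ≤ qInt q p := Finset.sum_le_sum fun i _ => one_le_pow₀ hq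

lemma natCast_le_qAnalog (hq : 1 ≤ q) {n : ℕ} (hn : n ≠ 0) : (n : ℝ) ≤ qAnalog q n :=
  calc (n : ℝ) = n.factorization.prod fun p a => (p : ℝ) ^ a := by
        conv_lhs => rw [← Nat.prod_factorization_pow_eq_self hn]
        simp only [Finsupp.prod, Nat.cast_prod, Nat.cast_pow]
    _ ≤ qAnalog q n :=
        Finset.prod_le_prod (fun p _ => by positivity)
          fun p _ => pow_le_pow_left₀ (by positivity) (natCast_le_qInt hq p) _

lemma qAnalog_pos (hq : 1 ≤ q) {n : ℕ} (hn : n ≠ 0) : 0 < qAnalog q n :=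
  (Nat.cast_pos.2 (Nat.pos_of_ne_zero hn)).trans_le (natCast_le_qAnalog hq hn)

lemma summable_qAnalog_rpow_neg (hq : 1 ≤ q) {β : ℝ} (hβ : 1 < β) :
    Summable fun k : ℕ+ => qAnalog q k ^ (-β) := by
  have hzeta : Summable fun k : ℕ+ => ((k : ℕ) : ℝ) ^ (-β) :=
    (Real.summable_nat_rpow.2 (by linarith)).comp_injective PNat.coe_injective
  refine hzeta.of_nonneg_of_le (fun k => (Real.rpow_pos_of_pos (qAnalog_pos hq k.ne_zero) _).le)
    fun k => ?_
  exact Real.rpow_le_rpow_of_nonpos (Nat.cast_pos.2 k.pos) (natCast_le_qAnalog hq k.ne_zero)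
    (by linarith)

end qAnalog

lemma inner_eps_smul_eps (k : ℕ+) (c : ℝ) : ⟪eps k, c • eps k⟫ = c := by
  rw [real_inner_smul_right, eps, lp.inner_single_left]
  simp [lp.single_apply]

lemma exp_neg_mul_log (β : ℝ) {x : ℝ} (hx : 0 < x) : Real.exp (-β * Real.log x) = x ^ (-β) := by
  rw [Real.rpow_def_of_pos hx, mul_comm]

/-- For the Hamiltonian `H ε_k = log{k}_q ε_k` on `ℓ²(ℕ⁺)` (`q > 1` real), the operator
`e^{-βH}` acts by `e^{-βH} ε_k = e^{-β log{k}_q} ε_k = {k}_q^{-β} ε_k`, and for `β > 1`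
the trace `Tr(e^{-βH}) = ∑_k ⟨ε_k, e^{-βH} ε_k⟩ = ∑_{k≥1} {k}_q^{-β} = ζ_q(β)` is
finite. -/
theorem trace_exp_neg_beta_H (q β : ℝ) (hq : 1 < q) (hβ : 1 < β) :
    Summable (fun k : ℕ+ => ⟪eps k, Real.exp (-β * Real.log (qAnalog q k)) • eps k⟫) ∧
      (∑' k : ℕ+, ⟪eps k, Real.exp (-β * Real.log (qAnalog q k)) • eps k⟫) =
        ∑' k : ℕ+, (qAnalog q k) ^ (-β) ∧
      Summable (fun k : ℕ+ => (qAnalog q k) ^ (-β)) := by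
  have diagonal : ∀ k : ℕ+,
      ⟪eps k, Real.exp (-β * Real.log (qAnalog q k)) • eps k⟫ = qAnalog q k ^ (-β) := fun k => by
    rw [inner_eps_smul_eps, exp_neg_mul_log β (qAnalog_pos hq.le k.ne_zero)]
  simpa only [diagonal, true_and, and_self] using summable_qAnalog_rpow_neg hq.le hβ
end
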